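/- Suppose the transition model p is known only at state-action-stage triples in the expert's support Z^{p,π^E}, and the deterministic expert policy π^E is known on its support S^{p,π^E}. If a reward r belongs to the feasible set R_{p',π^E} for every transition model p' agreeing with p on Z^{p,π^E}, then for every (s,h) ∈ S^{p,π^E} and every action a: r_h(s, π^E_h(s)) ≥ r_h(s, a). -/

import Mathlib

open Finset

/-- `QstarAux p r t h s a`: optimal `Q`-value at stage `h`, state `s`, action `a`,
with `t` further stages remaining after stage `h`. -/
noncomputable def QstarAux {S A : Type*} [Fintype S] [Fintype A] [Nonempty A]
    (p : ℕ → S → A → S → ℝ) (r : ℕ → S → A → ℝ) : ℕ → ℕ → S → A → ℝ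
  | 0, h, s, a => r h s a
  | t + 1, h, s, a =>
      r h s a + ∑ s' : S, p h s a s' *
        (univ.sup' univ_nonempty fun a' => QstarAux p r t (h + 1) s' a')

/-- The optimal Q-function `Q*_h` over horizon `H` (stages `0, …, H−1`). -/
noncomputable def Qstar {S A : Type*} [Fintype S] [Fintype A] [Nonempty A] (H : ℕ)
    (p : ℕ → S → A → S → ℝ) (r : ℕ → S → A → ℝ) (h : ℕ) : S → A → ℝ :=
  QstarAux p r (H - 1 - h) h

/-- The stochastic policy induced by a deterministic policy. -/
noncomputable def detPol {S A : Type*} [DecidableEq A] (πE : ℕ → S → A) :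
    ℕ → S → A → ℝ :=
  fun h s a => if a = πE h s then 1 else 0

/-- State visitation distribution `ρ^{p,π}_h(s)` from initial distribution `μ0`. -/
noncomputable def visit {S A : Type*} [Fintype S] [Fintype A] (μ0 : S → ℝ)
    (p : ℕ → S → A → S → ℝ) (π : ℕ → S → A → ℝ) : ℕ → S → ℝ
  | 0, s => μ0 s
  | h + 1, s' => ∑ s : S, ∑ a : A, visit μ0 p π h s * π h s a * p h s a s'

/-! Replace `p` by the model in which, at every `(s, h)`, all actions transition like the expert's
action. It agrees with `p` on the expert's support and leaves the expert's visitation unchanged,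
so `r` is feasible for it; and since the continuation value no longer depends on the action,
`Q*_h(s, ·)` differs from `r_h(s, ·)` by a constant. -/

section

variable {S A : Type*} [Fintype S] [Fintype A]

theorem visit_congr (μ0 : S → ℝ) {p p' : ℕ → S → A → S → ℝ} {π : ℕ → S → A → ℝ}
    (hpp' : ∀ h s a, π h s a ≠ 0 → p' h s a = p h s a) :
    visit μ0 p' π = visit μ0 p π := by
  funext h
  induction h with
  | zero => rfl
  | succ n ih =>
    funext s'
    simp only [visit, ih]
    refine sum_congr rfl fun s _ => sum_congr rfl fun a _ => ?_
    by_cases hπ : π n s a = 0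
    · simp [hπ]
    · rw [hpp' n s a hπ]

theorem visit_detPol_congr [DecidableEq A] (μ0 : S → ℝ) {p p' : ℕ → S → A → S → ℝ}
    {πE : ℕ → S → A} (hpp' : ∀ h s, p' h s (πE h s) = p h s (πE h s)) :
    visit μ0 p' (detPol πE) = visit μ0 p (detPol πE) :=
  visit_congr μ0 fun h s a ha => by
    obtain rfl : a = πE h s := by by_contra hne; exact ha (if_neg hne)
    exact hpp' h s

theorem QstarAux_le_iff_of_action_independent [Nonempty A] (q : ℕ → S → S → ℝ)
    (r : ℕ → S → A → ℝ) (t h : ℕ) (s : S) (a b : A) :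
    QstarAux (fun h s _ => q h s) r t h s a ≤ QstarAux (fun h s _ => q h s) r t h s b ↔
      r h s a ≤ r h s b := by
  cases t with
  | zero => rfl
  | succ t => simp only [QstarAux, add_le_add_iff_right]

end

theorem stmt13_general {S A : Type*} [Fintype S] [Fintype A] [Nonempty A] [DecidableEq A]
    (H : ℕ)
    (μ0 : S → ℝ)
    (p : ℕ → S → A → S → ℝ)
    (hp : ∀ h s a, (∀ s', 0 ≤ p h s a s') ∧ ∑ s' : S, p h s a s' = 1)
    (πE : ℕ → S → A) (r : ℕ → S → A → ℝ)
    (hfeas : ∀ p' : ℕ → S → A → S → ℝ,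
      (∀ h s a, (∀ s', 0 ≤ p' h s a s') ∧ ∑ s' : S, p' h s a s' = 1) →
      (∀ h < H, ∀ s, 0 < visit μ0 p (detPol πE) h s →
        p' h s (πE h s) = p h s (πE h s)) →
      (∀ h < H, ∀ s, 0 < visit μ0 p' (detPol πE) h s → ∀ a : A,
        Qstar H p' r h s a ≤ Qstar H p' r h s (πE h s))) :
    ∀ h < H, ∀ s, 0 < visit μ0 p (detPol πE) h s → ∀ a : A,
      r h s a ≤ r h s (πE h s) := by
  intro h hh s hs a
  let pE : ℕ → S → A → S → ℝ := fun h s _ => p h s (πE h s)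
  have hvisit : visit μ0 pE (detPol πE) = visit μ0 p (detPol πE) :=
    visit_detPol_congr μ0 fun _ _ => rfl
  have hQ := hfeas pE (fun h s _ => hp h s (πE h s)) (fun _ _ _ _ => rfl) h hh s
    (hvisit ▸ hs) a
  exact (QstarAux_le_iff_of_action_independent _ r _ h s a (πE h s)).1 hQ

/-- Greedy rewards (Proposition on the bitter lesson): if a reward `r` belongs to
the feasible set `R_{p',π^E}` for *every* transition model `p'` agreeing with `p`
on the expert's support `Z^{p,π^E}` (i.e. at triples `(s, π^E_h(s), h)` with
`ρ^{p,π^E}_h(s) > 0`), then on the expert's support the reward is greedy with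
respect to the expert: `r_h(s, π^E_h(s)) ≥ r_h(s,a)` for every action `a`. -/
theorem stmt13 {S A : Type*} [Fintype S] [Fintype A] [Nonempty A] [DecidableEq A]
    (H : ℕ) (hH : 1 ≤ H) (hA : 2 ≤ Fintype.card A)
    (μ0 : S → ℝ) (hμ0 : (∀ s, 0 ≤ μ0 s) ∧ ∑ s : S, μ0 s = 1)
    (p : ℕ → S → A → S → ℝ)
    (hp : ∀ h s a, (∀ s', 0 ≤ p h s a s') ∧ ∑ s' : S, p h s a s' = 1)
    (πE : ℕ → S → A) (r : ℕ → S → A → ℝ)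
    (hfeas : ∀ p' : ℕ → S → A → S → ℝ,
      (∀ h s a, (∀ s', 0 ≤ p' h s a s') ∧ ∑ s' : S, p' h s a s' = 1) →
      (∀ h < H, ∀ s, 0 < visit μ0 p (detPol πE) h s →
        p' h s (πE h s) = p h s (πE h s)) →
      (∀ h < H, ∀ s, 0 < visit μ0 p' (detPol πE) h s → ∀ a : A,
        Qstar H p' r h s a ≤ Qstar H p' r h s (πE h s))) :
    ∀ h < H, ∀ s, 0 < visit μ0 p (detPol πE) h s → ∀ a : A,
      r h s a ≤ r h s (πE h s) :=
  stmt13_general H μ0 p hp πE r hfeas
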